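/- arXiv:1602.07026 — 2 statements merged into one kernel-verified Lean document; each statement's English description precedes it below -/
import Mathlib

section
/- If (x_n) converges to x* with order p > 1 in the sense that |e_{n+1}|/|e_n|^p → C for some C > 0 (e_n = x_n - x*, e_n ≠ 0), then the approximated computational order of convergence ACOC_n = ln|(x_{n+1}-x_n)/(x_n-x_{n-1})| / ln|(x_n-x_{n-1})/(x_{n-1}-x_{n-2})| converges to p as n → ∞. -/
open Filter Topology

/-- If `(x_n)` converges to `a` with exact order `p > 1`
(`|e_{n+1}|/|e_n|^p → C ∈ (0,∞)`), then ACOC tends to `p`. -/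
theorem acoc_tendsto_order
    (x : ℕ → ℝ) (a p C : ℝ) (hp : 1 < p) (hC : 0 < C)
    (hne : ∀ n, x n ≠ x (n+1)) (hnea : ∀ n, x n ≠ a)
    (hlim : Tendsto x atTop (𝓝 a))
    (horder : Tendsto (fun n => |x (n+1) - a| / |x n - a| ^ p) atTop (𝓝 C)) :
    Tendsto (fun n => Real.log |(x (n+3) - x (n+2)) / (x (n+2) - x (n+1))| /
        Real.log |(x (n+2) - x (n+1)) / (x (n+1) - x n)|) atTop (𝓝 p) := by
  set e : ℕ → ℝ := fun n => x n - a with he_def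
  have he : ∀ n, e n ≠ 0 := fun n => sub_ne_zero.2 (hnea n)
  have heabs : ∀ n, (0:ℝ) < |e n| := fun n => abs_pos.2 (he n)
  have hd : ∀ n, x (n+1) - x n ≠ 0 := fun n => sub_ne_zero.2 (hne n).symm
  set u : ℕ → ℝ := fun n => Real.log |e n| with hu_def
  set r : ℕ → ℝ := fun n => Real.log (|e (n+1)| / |e n| ^ p) with hr_def
  set t : ℕ → ℝ := fun n => Real.log (|x (n+1) - x n| / |e n|) with ht_def
  -- |e n| → 0
  have habs : Tendsto (fun n => |e n|) atTop (𝓝 0) := by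
    have := (hlim.sub_const a).abs
    simpa using this
  -- u → atBot
  have hubot : Tendsto u atTop atBot := by
    apply Real.tendsto_log_nhdsGT_zero.comp
    exact tendsto_nhdsWithin_of_tendsto_nhds_of_eventually_within _ habs
      (Eventually.of_forall fun n => heabs n)
  -- r → log C
  have hr : Tendsto r atTop (𝓝 (Real.log C)) := horder.log hC.ne'
  -- |e(n+1)|/|e n| → 0
  have hratio : Tendsto (fun n => |e (n+1)| / |e n|) atTop (𝓝 0) := by
    have h1 : Tendsto (fun n => |e n| ^ (p-1)) atTop (𝓝 0) := by
      have hc := (Real.continuousAt_rpow_const 0 (p-1) (Or.inr (by linarith))).tendsto.comp habs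
      rw [Real.zero_rpow (by linarith : p - 1 ≠ 0)] at hc
      exact hc
    have h2 := horder.mul h1
    rw [mul_zero] at h2
    refine h2.congr fun n => ?_
    show |e (n+1)| / |e n| ^ p * |e n| ^ (p-1) = _
    rw [div_mul_eq_mul_div, mul_div_assoc, ← Real.rpow_sub (heabs n)]
    have hexp : p - 1 - p = -1 := by ring
    rw [hexp, Real.rpow_neg_one, div_eq_mul_inv]
  -- t → 0
  have ht : Tendsto t atTop (𝓝 0) := by
    have hq : Tendsto (fun n => e (n+1) / e n) atTop (𝓝 0) := by
      rw [tendsto_zero_iff_abs_tendsto_zero]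
      refine hratio.congr fun n => ?_
      simp [abs_div]
    have hm : Tendsto (fun n => |x (n+1) - x n| / |e n|) atTop (𝓝 1) := by
      have h1 : Tendsto (fun n => e (n+1) / e n - 1) atTop (𝓝 (-1)) := by
        have := hq.sub_const 1
        simpa using this
      have h2 := h1.abs
      rw [abs_neg, abs_one] at h2
      refine h2.congr fun n => ?_
      have key : e (n+1) / e n - 1 = (x (n+1) - x n) / e n := by
        rw [eq_div_iff (he n), sub_mul, div_mul_cancel₀ _ (he n), one_mul]
        show x (n+1) - a - (x n - a) = x (n+1) - x n
        ring
      rw [← abs_div, key]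
    have := hm.log one_ne_zero
    simpa using this
  -- key identities
  have hukey : ∀ n, u (n+1) = p * u n + r n := by
    intro n
    have h1 : |e (n+1)| = |e (n+1)| / |e n| ^ p * |e n| ^ p := by
      rw [div_mul_cancel₀]
      exact (Real.rpow_pos_of_pos (heabs n) p).ne'
    show Real.log |e (n+1)| = p * Real.log |e n| + r n
    rw [h1, Real.log_mul (div_ne_zero (heabs (n+1)).ne' (Real.rpow_pos_of_pos (heabs n) p).ne')
      (Real.rpow_pos_of_pos (heabs n) p).ne', Real.log_rpow (heabs n)]
    ring
  have hdkey : ∀ n, Real.log |x (n+1) - x n| = t n + u n := by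
    intro n
    have h1 : |x (n+1) - x n| = |x (n+1) - x n| / |e n| * |e n| := by
      rw [div_mul_cancel₀ _ (heabs n).ne']
    show Real.log |x (n+1) - x n| = t n + Real.log |e n|
    conv_lhs => rw [h1]
    rw [Real.log_mul (div_ne_zero (abs_pos.2 (hd n)).ne' (heabs n).ne') (heabs n).ne']
  set s : ℕ → ℝ := fun n => t (n+1) - t n + r n with hs_def
  set w : ℕ → ℝ := fun n => (p-1) * r n + s (n+1) with hw_def
  have hs : Tendsto s atTop (𝓝 (Real.log C)) := by
    have := (((ht.comp (tendsto_add_atTop_nat 1)).sub ht).add hr)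
    simpa using this
  have hw : Tendsto w atTop (𝓝 (p * Real.log C)) := by
    have h1 : Tendsto (fun n => (p-1) * r n) atTop (𝓝 ((p-1) * Real.log C)) :=
      hr.const_mul _
    have h2 : Tendsto (fun n => s (n+1)) atTop (𝓝 (Real.log C)) :=
      hs.comp (tendsto_add_atTop_nat 1)
    have h3 := h1.add h2
    have h4 : (p - 1) * Real.log C + Real.log C = p * Real.log C := by ring
    rw [h4] at h3
    exact h3
  -- L n := log|d(n+1)| - log|d n|
  set L : ℕ → ℝ := fun n => Real.log |x (n+2) - x (n+1)| - Real.log |x (n+1) - x n|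
    with hL_def
  have hLkey : ∀ n, L n = (p-1) * u n + s n := by
    intro n
    show Real.log |x (n+2) - x (n+1)| - Real.log |x (n+1) - x n| = _
    rw [hdkey (n+1), hdkey n, hukey n]
    simp only [hs_def]
    ring
  have hLkey2 : ∀ n, L (n+1) = p * (p-1) * u n + w n := by
    intro n
    rw [hLkey (n+1), hukey n]
    simp only [hw_def, hs_def]
    ring
  -- inverse of u tends to 0
  have huinv : Tendsto (fun n => (u n)⁻¹) atTop (𝓝 0) := by
    have h1 : Tendsto (fun n => -u n) atTop atTop := tendsto_neg_atBot_atTop.comp hubot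
    have h2 := tendsto_inv_atTop_zero.comp h1
    have h3 := h2.neg
    rw [neg_zero] at h3
    refine h3.congr fun n => ?_
    show -(-u n)⁻¹ = (u n)⁻¹
    rw [inv_neg, neg_neg]
  -- the auxiliary limit
  have hg : Tendsto (fun n => (p * (p-1) + w n * (u n)⁻¹) / ((p-1) + s n * (u n)⁻¹))
      atTop (𝓝 p) := by
    have hnum : Tendsto (fun n => p * (p-1) + w n * (u n)⁻¹) atTop (𝓝 (p * (p-1))) := by
      have := (hw.mul huinv).const_add (p * (p-1))
      simpa using this
    have hden : Tendsto (fun n => (p-1) + s n * (u n)⁻¹) atTop (𝓝 (p-1)) := by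
      have := (hs.mul huinv).const_add (p - 1)
      simpa using this
    have := hnum.div hden (by linarith : p - 1 ≠ 0)
    rwa [mul_div_assoc, div_self (by linarith : p - 1 ≠ 0), mul_one] at this
  -- eventual equality
  refine hg.congr' ?_
  have hev : ∀ᶠ n in atTop, u n ≠ 0 := by
    filter_upwards [hubot.eventually (eventually_lt_atBot (0:ℝ))] with n hn
    exact hn.ne
  filter_upwards [hev] with n hn
  have h1 : Real.log |(x (n+3) - x (n+2)) / (x (n+2) - x (n+1))| = L (n+1) := by
    rw [abs_div, Real.log_div (abs_pos.2 (hd (n+2))).ne' (abs_pos.2 (hd (n+1))).ne']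
  have h2 : Real.log |(x (n+2) - x (n+1)) / (x (n+1) - x n)| = L n := by
    rw [abs_div, Real.log_div (abs_pos.2 (hd (n+1))).ne' (abs_pos.2 (hd n)).ne']
  rw [h1, h2, hLkey2 n, hLkey n]
  rw [eq_comm, ← mul_div_mul_right _ _ (inv_ne_zero hn)]
  congr 1 <;> field_simp
end

section
/- Let f be C⁸ with simple zero x* and e_y := y - x* = O(e²) where e = x - x* → 0, y = x - f(x)/f'(x). If z is defined by the second substep of method (1), then f(z) = f'(x*)·(e_z + O(e_z²)) where e_z = z - x*, and consequently f(z) = O(e⁴). -/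
open Filter Topology Asymptotics

/-!
Write `e = x - a` and `c = f''(a) / (2 f'(a))`. Second-order Taylor expansions of `f` and `f'`
give `u = e + O(e²)`, `y - a = c e² + O(e³)`, `t = f(y)/f(x) = c e + O(e²)` and
`1 + 1/(1 + u) = 2 + O(e)`. Since `u t = f(y)/f'(x)`,
`z - a = (y - a - f(y)/f'(x)) - u (1 + 1/(1 + u)) t²`, and both brackets are `2 c² e³ + O(e⁴)`,
so `z - a = O(e⁴)`. Both claims then follow from `f(w) = f'(a)(w - a) + O((w - a)²)` at `w = z`.
-/

section LeadingTerm

variable {α 𝕜 : Type*} [NormedField 𝕜] {l l' : Filter α} {ε g g₁ g₂ : α → 𝕜} {κ κ₁ κ₂ : 𝕜}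
  {i j : ℕ}

def HasLeadingTerm (l : Filter α) (ε g : α → 𝕜) (κ : 𝕜) (j : ℕ) : Prop :=
  (fun x => g x - κ * ε x ^ j) =O[l] fun x => ε x ^ (j + 1)

lemma isBigO_pow_succ_pow (hε : Tendsto ε l (𝓝 0)) :
    (fun x => ε x ^ (j + 1)) =O[l] fun x => ε x ^ j :=
  ((isLittleO_pow_pow j.lt_succ_self).comp_tendsto hε).isBigO

lemma hasLeadingTerm_zero_iff : HasLeadingTerm l ε g 0 j ↔ g =O[l] fun x => ε x ^ (j + 1) := by
  simp [HasLeadingTerm]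

lemma hasLeadingTerm_self : HasLeadingTerm l ε ε 1 1 := by
  simpa [HasLeadingTerm] using isBigO_zero _ _

lemma hasLeadingTerm_const (c : 𝕜) : HasLeadingTerm l ε (fun _ => c) c 0 := by
  simpa [HasLeadingTerm] using isBigO_zero _ _

namespace HasLeadingTerm

lemma mono (h : HasLeadingTerm l ε g κ j) (hl : l' ≤ l) : HasLeadingTerm l' ε g κ j :=
  IsBigO.mono h hl

lemma congr' (h : HasLeadingTerm l ε g₁ κ₁ j) (hg : g₁ =ᶠ[l] g₂) (hκ : κ₁ = κ₂) :
    HasLeadingTerm l ε g₂ κ₂ j :=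
  hκ ▸ IsBigO.congr' h (hg.mono fun x hx => by simp only [hx]) EventuallyEq.rfl

lemma isBigO (h : HasLeadingTerm l ε g κ j) (hε : Tendsto ε l (𝓝 0)) :
    g =O[l] fun x => ε x ^ j :=
  ((h.trans (isBigO_pow_succ_pow hε)).add ((isBigO_refl _ l).const_mul_left κ)).congr
    (fun x => by ring) fun _ => rfl

lemma add (h₁ : HasLeadingTerm l ε g₁ κ₁ j) (h₂ : HasLeadingTerm l ε g₂ κ₂ j) :
    HasLeadingTerm l ε (fun x => g₁ x + g₂ x) (κ₁ + κ₂) j :=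
  (IsBigO.add h₁ h₂).congr (fun x => by ring) fun _ => rfl

lemma const_mul (h : HasLeadingTerm l ε g κ j) (c : 𝕜) :
    HasLeadingTerm l ε (fun x => c * g x) (c * κ) j :=
  (IsBigO.const_mul_left h c).congr_left fun x => by ring

lemma sub (h₁ : HasLeadingTerm l ε g₁ κ₁ j) (h₂ : HasLeadingTerm l ε g₂ κ₂ j) :
    HasLeadingTerm l ε (fun x => g₁ x - g₂ x) (κ₁ - κ₂) j :=
  (IsBigO.sub h₁ h₂).congr (fun x => by ring) fun _ => rfl

lemma mul (h₁ : HasLeadingTerm l ε g₁ κ₁ i) (h₂ : HasLeadingTerm l ε g₂ κ₂ j)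
    (hε : Tendsto ε l (𝓝 0)) :
    HasLeadingTerm l ε (fun x => g₁ x * g₂ x) (κ₁ * κ₂) (i + j) := by
  have e₁ : (fun x => (g₁ x - κ₁ * ε x ^ i) * g₂ x) =O[l] fun x => ε x ^ (i + j + 1) :=
    (IsBigO.mul h₁ (h₂.isBigO hε)).congr_right fun x => by ring
  have e₂ : (fun x => κ₁ * (ε x ^ i * (g₂ x - κ₂ * ε x ^ j))) =O[l] fun x => ε x ^ (i + j + 1) :=
    (((isBigO_refl (fun x => ε x ^ i) l).mul h₂).const_mul_left κ₁).congr_right fun x => by ring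
  exact (e₁.add e₂).congr_left fun x => by ring

lemma tendsto (h : HasLeadingTerm l ε g κ 0) (hε : Tendsto ε l (𝓝 0)) : Tendsto g l (𝓝 κ) := by
  have : Tendsto (fun x => g x - κ * ε x ^ 0) l (𝓝 0) :=
    h.trans_tendsto (by simpa using hε)
  simpa using this.add_const κ

lemma inv (h : HasLeadingTerm l ε g κ 0) (hε : Tendsto ε l (𝓝 0)) (hκ : κ ≠ 0) :
    HasLeadingTerm l ε (fun x => (g x)⁻¹) κ⁻¹ 0 := by
  have hg := h.tendsto hε
  have hinv : (fun x => (g x)⁻¹) =O[l] fun _ => (1 : 𝕜) := (hg.inv₀ hκ).isBigO_one 𝕜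
  refine ((IsBigO.mul h hinv).const_mul_left (-κ⁻¹)).congr' ?_ (by simp)
  filter_upwards [hg.eventually_ne hκ] with x hx
  field_simp
  ring

lemma div_pow (h : HasLeadingTerm l ε g κ (i + j)) (hε0 : ∀ᶠ x in l, ε x ≠ 0) :
    HasLeadingTerm l ε (fun x => g x / ε x ^ i) κ j := by
  refine (IsBigO.mul h (isBigO_refl (fun x => (ε x ^ i)⁻¹) l)).congr' ?_ ?_
  all_goals
    filter_upwards [hε0] with x hx
    field_simp
    ring

lemma div (h₁ : HasLeadingTerm l ε g₁ κ₁ (i + j)) (h₂ : HasLeadingTerm l ε g₂ κ₂ i)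
    (hε : Tendsto ε l (𝓝 0)) (hε0 : ∀ᶠ x in l, ε x ≠ 0) (hκ₂ : κ₂ ≠ 0) :
    HasLeadingTerm l ε (fun x => g₁ x / g₂ x) (κ₁ / κ₂) j := by
  have h₂' : HasLeadingTerm l ε (fun x => g₂ x / ε x ^ i) κ₂ 0 := div_pow h₂ hε0
  rw [div_eq_mul_inv]
  refine ((h₁.div_pow hε0).mul (h₂'.inv hε hκ₂) hε).congr' ?_ rfl
  filter_upwards [hε0] with x hx
  field_simp

lemma eventually_ne_zero (h : HasLeadingTerm l ε g κ j) (hε : Tendsto ε l (𝓝 0))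
    (hε0 : ∀ᶠ x in l, ε x ≠ 0) (hκ : κ ≠ 0) : ∀ᶠ x in l, g x ≠ 0 := by
  filter_upwards [((h.div_pow (j := 0) hε0).tendsto hε).eventually_ne hκ] with x hx hg
  simp [hg] at hx

end HasLeadingTerm

end LeadingTerm

theorem ContDiffAt.isBigO_sub_taylorWithinEval {E : Type*} [NormedAddCommGroup E]
    [NormedSpace ℝ E] {f : ℝ → E} {a : ℝ} {n : ℕ} (hf : ContDiffAt ℝ (n + 1) f a) :
    (fun x => f x - taylorWithinEval f n Set.univ a x) =O[𝓝 a] fun x => (x - a) ^ (n + 1) := by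
  obtain ⟨s, hs, hfs⟩ := hf.contDiffOn le_rfl (by simp)
  obtain ⟨δ, hδ, hball⟩ := Metric.mem_nhds_iff.1 hs
  have hT := taylor_isLittleO (convex_ball a δ) (Metric.mem_ball_self hδ) (hfs.mono hball)
  rw [nhdsWithin_eq_nhds.2 (Metric.ball_mem_nhds a hδ)] at hT
  have hcoeff (k : ℕ) : iteratedDerivWithin k f (Metric.ball a δ) a = iteratedDeriv k f a :=
    iteratedDerivWithin_of_isOpen Metric.isOpen_ball (Metric.mem_ball_self hδ)
  have hlast : (fun x => (((n + 1 : ℝ) * n.factorial)⁻¹ * (x - a) ^ (n + 1)) •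
      iteratedDeriv (n + 1) f a) =O[𝓝 a] fun x => (x - a) ^ (n + 1) := by
    simpa using ((isBigO_refl (fun x => (x - a) ^ (n + 1)) (𝓝 a)).const_mul_left
      ((n + 1 : ℝ) * n.factorial)⁻¹).smul
        (isBigO_const_const (iteratedDeriv (n + 1) f a) (one_ne_zero' ℝ) (𝓝 a))
  refine (hT.isBigO.add hlast).congr (fun x => ?_) fun _ => rfl
  simp only [taylorWithinEval_succ, taylor_within_apply, hcoeff, iteratedDerivWithin_univ]
  abel

lemma ContDiffAt.hasLeadingTerm_sub_tangent {f : ℝ → ℝ} {a : ℝ} (hf : ContDiffAt ℝ 3 f a) :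
    HasLeadingTerm (𝓝 a) (· - a) (fun x => f x - (f a + deriv f a * (x - a)))
      (deriv (deriv f) a / 2) 2 :=
  (ContDiffAt.isBigO_sub_taylorWithinEval (n := 2) hf).congr_left fun x => by
    simp [taylor_within_apply, iteratedDerivWithin_univ, iteratedDeriv_succ]
    ring

lemma ContDiffAt.hasLeadingTerm_sub {g : ℝ → ℝ} {a : ℝ} (hg : ContDiffAt ℝ 2 g a) :
    HasLeadingTerm (𝓝 a) (· - a) (fun x => g x - g a) (deriv g a) 1 :=
  (ContDiffAt.isBigO_sub_taylorWithinEval (n := 1) hg).congr_left fun x => by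
    simp [taylor_within_apply, iteratedDerivWithin_univ]
    ring

noncomputable section

def newtonCorrection (f : ℝ → ℝ) (x : ℝ) : ℝ := f x / deriv f x

def newtonStep (f : ℝ → ℝ) (x : ℝ) : ℝ := x - newtonCorrection f x

def weightedNewtonStep (f : ℝ → ℝ) (x : ℝ) : ℝ :=
  x - newtonCorrection f x * (1 + f (newtonStep f x) / f x
    + (1 + 1 / (1 + newtonCorrection f x)) * (f (newtonStep f x) / f x) ^ 2)

end

lemma tendsto_sub_self_nhds (a : ℝ) : Tendsto (· - a) (𝓝 a) (𝓝 0) :=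
  tendsto_sub_nhds_zero_iff.2 tendsto_id

lemma tendsto_sub_nhdsNE (a : ℝ) : Tendsto (· - a) (𝓝[≠] a) (𝓝 0) :=
  (tendsto_sub_self_nhds a).mono_left nhdsWithin_le_nhds

lemma eventually_sub_ne_zero_nhdsNE (a : ℝ) : ∀ᶠ x in 𝓝[≠] a, x - a ≠ 0 :=
  eventually_nhdsWithin_of_forall fun _ hx => sub_ne_zero.2 hx

section WeightedNewton

variable {f : ℝ → ℝ} {a : ℝ}

lemma hasLeadingTerm_apply (hf : ContDiffAt ℝ 3 f a) (h0 : f a = 0) :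
    HasLeadingTerm (𝓝 a) (· - a) f (deriv f a) 1 :=
  (hf.hasLeadingTerm_sub_tangent.isBigO (tendsto_sub_self_nhds a)).congr_left
    fun x => by simp [h0]

lemma hasLeadingTerm_deriv_sub (hf : ContDiffAt ℝ 3 f a) :
    HasLeadingTerm (𝓝 a) (· - a) (fun x => deriv f x - deriv f a) (deriv (deriv f) a) 1 :=
  (hf.derivWithin (m := 2) (by norm_num)).hasLeadingTerm_sub

lemma hasLeadingTerm_deriv (hf : ContDiffAt ℝ 3 f a) :
    HasLeadingTerm (𝓝 a) (· - a) (deriv f) (deriv f a) 0 :=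
  ((hasLeadingTerm_deriv_sub hf).isBigO (tendsto_sub_self_nhds a)).congr
    (fun x => by simp) fun x => by simp

lemma hasLeadingTerm_newtonCorrection (hf : ContDiffAt ℝ 3 f a) (h0 : f a = 0)
    (hA : deriv f a ≠ 0) : HasLeadingTerm (𝓝[≠] a) (· - a) (newtonCorrection f) 1 1 :=
  ((hasLeadingTerm_apply hf h0).mono nhdsWithin_le_nhds |>.div (i := 0)
    ((hasLeadingTerm_deriv hf).mono nhdsWithin_le_nhds) (tendsto_sub_nhdsNE a)
    (eventually_sub_ne_zero_nhdsNE a) hA).congr' EventuallyEq.rfl (div_self hA)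

lemma eventually_deriv_ne_zero (hf : ContDiffAt ℝ 3 f a) (hA : deriv f a ≠ 0) :
    ∀ᶠ x in 𝓝[≠] a, deriv f x ≠ 0 :=
  ((hasLeadingTerm_deriv hf).mono nhdsWithin_le_nhds).eventually_ne_zero (tendsto_sub_nhdsNE a)
    (eventually_sub_ne_zero_nhdsNE a) hA

lemma hasLeadingTerm_newtonStep_sub (hf : ContDiffAt ℝ 3 f a) (h0 : f a = 0)
    (hA : deriv f a ≠ 0) :
    HasLeadingTerm (𝓝[≠] a) (· - a) (fun x => newtonStep f x - a)
      (deriv (deriv f) a / 2 / deriv f a) 2 := by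
  have hε := tendsto_sub_nhdsNE a
  have hd := (hasLeadingTerm_deriv_sub hf).mono (nhdsWithin_le_nhds (s := {a}ᶜ))
  have hT := hf.hasLeadingTerm_sub_tangent.mono (nhdsWithin_le_nhds (s := {a}ᶜ))
  -- `y - a = ((x - a)(f'(x) - f'(a)) - (f(x) - f(a) - f'(a)(x - a))) / f'(x)`
  refine (((hasLeadingTerm_self.mul hd hε).sub hT).div (i := 0)
    ((hasLeadingTerm_deriv hf).mono nhdsWithin_le_nhds) hε (eventually_sub_ne_zero_nhdsNE a)
    hA).congr' ?_ (by ring)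
  filter_upwards [eventually_deriv_ne_zero hf hA] with x hx
  simp only [newtonStep, newtonCorrection, h0]
  field_simp
  ring

lemma hasLeadingTerm_apply_newtonStep_sub (hf : ContDiffAt ℝ 3 f a) (h0 : f a = 0)
    (hA : deriv f a ≠ 0) :
    HasLeadingTerm (𝓝[≠] a) (· - a)
      (fun x => f (newtonStep f x) - deriv f a * (newtonStep f x - a)) 0 3 := by
  have hy := (hasLeadingTerm_newtonStep_sub hf h0 hA).isBigO (tendsto_sub_nhdsNE a)
  have hyt : Tendsto (newtonStep f) (𝓝[≠] a) (𝓝 a) :=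
    tendsto_sub_nhds_zero_iff.1 (hy.trans_tendsto (by simpa using (tendsto_sub_nhdsNE a).pow 2))
  rw [hasLeadingTerm_zero_iff]
  refine (((hasLeadingTerm_apply hf h0).comp_tendsto hyt).trans (hy.pow 2)).congr
    (fun x => by simp) fun x => by ring

lemma hasLeadingTerm_apply_newtonStep_div (hf : ContDiffAt ℝ 3 f a) (h0 : f a = 0)
    (hA : deriv f a ≠ 0) :
    HasLeadingTerm (𝓝[≠] a) (· - a) (fun x => f (newtonStep f x) / f x)
      (deriv (deriv f) a / 2 / deriv f a) 1 := by
  have hε := tendsto_sub_nhdsNE a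
  have hfy := (hasLeadingTerm_zero_iff.2 ((hasLeadingTerm_apply_newtonStep_sub hf h0 hA).isBigO
    hε)).add ((hasLeadingTerm_newtonStep_sub hf h0 hA).const_mul (deriv f a))
  exact (hfy.div (i := 1) ((hasLeadingTerm_apply hf h0).mono nhdsWithin_le_nhds) hε
    (eventually_sub_ne_zero_nhdsNE a) hA).congr' (.of_eq (by simp)) (by field_simp; ring)

lemma hasLeadingTerm_weight (hf : ContDiffAt ℝ 3 f a) (h0 : f a = 0) (hA : deriv f a ≠ 0) :
    HasLeadingTerm (𝓝[≠] a) (· - a) (fun x => 1 + 1 / (1 + newtonCorrection f x)) 2 0 := by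
  have hε := tendsto_sub_nhdsNE a
  have hu : HasLeadingTerm (𝓝[≠] a) (· - a) (newtonCorrection f) 0 0 :=
    hasLeadingTerm_zero_iff.2 ((hasLeadingTerm_newtonCorrection hf h0 hA).isBigO hε)
  exact (hasLeadingTerm_const 1).add (((hasLeadingTerm_const 1).add hu).inv hε (by norm_num))
    |>.congr' (.of_eq (by simp)) (by norm_num)

/-- The expansion is carried out on the punctured neighbourhood, where `x - a ≠ 0` makes the
division by `f x ~ f'(a) (x - a)` harmless; the point `a` itself is a fixed point. -/
lemma weightedNewtonStep_sub_isBigO (hf : ContDiffAt ℝ 3 f a) (h0 : f a = 0)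
    (hA : deriv f a ≠ 0) :
    (fun x => weightedNewtonStep f x - a) =O[𝓝 a] fun x => (x - a) ^ 4 := by
  have hε := tendsto_sub_nhdsNE a
  have hε0 := eventually_sub_ne_zero_nhdsNE a
  have hf' := (hasLeadingTerm_deriv hf).mono (nhdsWithin_le_nhds (s := {a}ᶜ))
  have ht := hasLeadingTerm_apply_newtonStep_div hf h0 hA
  -- `y - a - f(y)/f'(x) = ((y - a)(f'(x) - f'(a)) - (f(y) - f'(a)(y - a))) / f'(x)`
  have h₁ := (((hasLeadingTerm_newtonStep_sub hf h0 hA).mul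
    ((hasLeadingTerm_deriv_sub hf).mono nhdsWithin_le_nhds) hε).sub
    (hasLeadingTerm_apply_newtonStep_sub hf h0 hA)).div (i := 0) (j := 3) hf' hε hε0 hA
  have h₂ := (((hasLeadingTerm_newtonCorrection hf h0 hA).mul
    (hasLeadingTerm_weight hf h0 hA) hε).mul ht hε).mul ht hε
  have hz : HasLeadingTerm (𝓝[≠] a) (· - a) (fun x => weightedNewtonStep f x - a) 0 3 := by
    refine (h₁.sub h₂).congr' ?_ (by field_simp; ring)
    filter_upwards [eventually_deriv_ne_zero hf hA,
      ((hasLeadingTerm_apply hf h0).mono nhdsWithin_le_nhds).eventually_ne_zero hε hε0 hA]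
      with x hf'x hfx
    simp only [weightedNewtonStep, newtonStep, newtonCorrection]
    field_simp
    ring
  rw [← nhdsNE_sup_pure a]
  exact (hasLeadingTerm_zero_iff.1 hz).sup
    (isBigO_pure.2 fun _ => by simp [weightedNewtonStep, newtonCorrection, h0])

end WeightedNewton

theorem fz_expansion_and_order_general
    (f : ℝ → ℝ) (a : ℝ) (hf : ContDiffAt ℝ 8 f a)
    (h0 : f a = 0) (h1 : deriv f a ≠ 0)
    (u y z : ℝ → ℝ)
    (hu : ∀ x, u x = f x / deriv f x)
    (hy : ∀ x, y x = x - u x)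
    (hz : ∀ x, z x = x - u x * (1 + f (y x) / f x
        + (1 + 1/(1 + u x)) * (f (y x) / f x)^2)) :
    ((fun x => f (z x) - deriv f a * (z x - a)) =O[𝓝 a] fun x => (z x - a)^2) ∧
    ((fun x => f (z x)) =O[𝓝 a] fun x => (x - a)^4) := by
  obtain rfl : u = newtonCorrection f := funext hu
  obtain rfl : y = newtonStep f := funext hy
  obtain rfl : z = weightedNewtonStep f := funext hz
  have hf3 : ContDiffAt ℝ 3 f a := hf.of_le (by norm_num)
  have hz4 := weightedNewtonStep_sub_isBigO hf3 h0 h1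
  have hzt : Tendsto (weightedNewtonStep f) (𝓝 a) (𝓝 a) :=
    tendsto_sub_nhds_zero_iff.1 (hz4.trans_tendsto
      (by simpa using (tendsto_sub_self_nhds a).pow 4))
  have hfa := hasLeadingTerm_apply hf3 h0
  refine ⟨(hfa.comp_tendsto hzt).congr (fun x => by simp) fun x => by simp, ?_⟩
  exact ((hfa.isBigO (tendsto_sub_self_nhds a)).comp_tendsto hzt).trans
    (hz4.congr_left fun x => by simp) |>.congr_left fun x => by simp

/-- With `z` the second substep of method (1), `f(z) = f'(a)(e_z + O(e_z²))`
where `e_z = z - a`, and consequently `f(z) = O(e⁴)`. -/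
theorem fz_expansion_and_order
    (f : ℝ → ℝ) (a : ℝ) (hf : ContDiffAt ℝ 8 f a)
    (h0 : f a = 0) (h1 : deriv f a ≠ 0)
    (u y z : ℝ → ℝ)
    (hu : ∀ x, u x = f x / deriv f x)
    (hy : ∀ x, y x = x - u x)
    (hey : (fun x => y x - a) =O[𝓝 a] fun x => (x - a)^2)
    (hz : ∀ x, z x = x - u x * (1 + f (y x) / f x
        + (1 + 1/(1 + u x)) * (f (y x) / f x)^2)) :
    ((fun x => f (z x) - deriv f a * (z x - a)) =O[𝓝 a] fun x => (z x - a)^2) ∧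
    ((fun x => f (z x)) =O[𝓝 a] fun x => (x - a)^4) :=
  fz_expansion_and_order_general f a hf h0 h1 u y z hu hy hz
end
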